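/- arXiv:1811.03872 — 5 statements merged into one kernel-verified Lean document; each statement's English description precedes it below -/
import Mathlib

section
/- For any compact subset X of a Banach space B, the thickness exponent satisfies τ(X) ≤ d_B(X). -/
open Filter Metric Set Pointwise Topology

/-- `coverNum X ε` : minimal number of balls of radius `ε` with centres in `X` covering `X`. -/
noncomputable def coverNum {E : Type*} [SeminormedAddCommGroup E] (X : Set E) (ε : ℝ) : ℕ∞ :=
  sInf {n : ℕ∞ | ∃ F : Finset E, ↑F ⊆ X ∧ (X ⊆ ⋃ c ∈ F, Metric.ball c ε) ∧ n = F.card}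

/-- extended logarithm of an extended natural number. -/
noncomputable def elog (n : ℕ∞) : EReal :=
  if n = ⊤ then ⊤ else ((Real.log n.toNat : ℝ) : EReal)

/-- The upper box-counting dimension `d_B(X) = limsup_{ε → 0⁺} log N(X,ε) / (-log ε)`. -/
noncomputable def dimBox {E : Type*} [SeminormedAddCommGroup E] (X : Set E) : EReal :=
  Filter.limsup (fun ε : ℝ => elog (coverNum X ε) / ((-Real.log ε : ℝ) : EReal)) (𝓝[>] 0)

/-- `thickNum X ε` : smallest dimension of a finite-dimensional subspace `V` with
`dist(x, V) ≤ ε` for all `x ∈ X` (`⊤` if none exists). -/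
noncomputable def thickNum {E : Type*} [NormedAddCommGroup E] [NormedSpace ℝ E]
    (X : Set E) (ε : ℝ) : ℕ∞ :=
  sInf {n : ℕ∞ | ∃ V : Submodule ℝ E, FiniteDimensional ℝ V ∧ n = Module.finrank ℝ V ∧
    ∀ x ∈ X, Metric.infDist x (V : Set E) ≤ ε}

/-- The thickness exponent `τ(X) = limsup_{ε → 0⁺} log d(X,ε) / (-log ε)`. -/
noncomputable def thickness {E : Type*} [NormedAddCommGroup E] [NormedSpace ℝ E]
    (X : Set E) : EReal :=
  Filter.limsup (fun ε : ℝ => elog (thickNum X ε) / ((-Real.log ε : ℝ) : EReal)) (𝓝[>] 0)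

/-- `dualThickNum X θ ε` : minimal dimension of a subspace `U ⊆ E*` such that for all
`x, y ∈ X` with `‖x - y‖ ≥ ε` some `φ ∈ U` has `|φ(x-y)| ≥ ε^(1+θ)`. -/
noncomputable def dualThickNum {E : Type*} [NormedAddCommGroup E] [NormedSpace ℝ E]
    (X : Set E) (θ ε : ℝ) : ℕ∞ :=
  sInf {n : ℕ∞ | ∃ U : Submodule ℝ (E →L[ℝ] ℝ), FiniteDimensional ℝ U ∧ n = Module.finrank ℝ U ∧
    ∀ x ∈ X, ∀ y ∈ X, ε ≤ ‖x - y‖ → ∃ φ ∈ U, ε ^ (1 + θ) ≤ |φ (x - y)|}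

noncomputable def dualThickTheta {E : Type*} [NormedAddCommGroup E] [NormedSpace ℝ E]
    (X : Set E) (θ : ℝ) : EReal :=
  Filter.limsup (fun ε : ℝ => elog (dualThickNum X θ ε) / ((-Real.log ε : ℝ) : EReal)) (𝓝[>] 0)

/-- The dual thickness `τ*(X) = lim_{θ → 0⁺} τ*_θ(X)` (the limit exists by monotonicity and
equals the limsup as `θ → 0⁺`). -/
noncomputable def dualThickness {E : Type*} [NormedAddCommGroup E] [NormedSpace ℝ E]
    (X : Set E) : EReal :=
  Filter.limsup (fun θ : ℝ => dualThickTheta X θ) (𝓝[>] 0)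

/-- `sigmaNum X α ε` : minimal dimension of a subspace `V ⊆ E*` such that whenever
`x, y ∈ X` with `‖x - y‖ ≥ ε` there is `Φ ∈ V` with `‖Φ‖ = 1` and `|Φ(x-y)| ≥ α ε`. -/
noncomputable def sigmaNum {E : Type*} [NormedAddCommGroup E] [NormedSpace ℝ E]
    (X : Set E) (α ε : ℝ) : ℕ∞ :=
  sInf {n : ℕ∞ | ∃ V : Submodule ℝ (E →L[ℝ] ℝ), FiniteDimensional ℝ V ∧ n = Module.finrank ℝ V ∧
    ∀ x ∈ X, ∀ y ∈ X, ε ≤ ‖x - y‖ → ∃ Φ ∈ V, ‖Φ‖ = 1 ∧ α * ε ≤ |Φ (x - y)|}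

noncomputable def sigmaExp {E : Type*} [NormedAddCommGroup E] [NormedSpace ℝ E]
    (X : Set E) (α : ℝ) : EReal :=
  Filter.limsup (fun ε : ℝ => elog (sigmaNum X α ε) / ((-Real.log ε : ℝ) : EReal)) (𝓝[>] 0)

lemma elog_mono {m n : ℕ∞} (h : m ≤ n) : elog m ≤ elog n := by
  unfold elog
  by_cases hn : n = ⊤
  · simp [hn]
  · have hm : m ≠ ⊤ := fun hm => hn (top_le_iff.1 (hm ▸ h))
    simp only [hm, hn, if_false]
    norm_cast
    have hmn : m.toNat ≤ n.toNat := by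
      lift m to ℕ using hm; lift n to ℕ using hn
      simpa using h
    rcases Nat.eq_zero_or_pos m.toNat with h0 | h0
    · rw [h0]
      simp only [Nat.cast_zero, Real.log_zero]
      rcases Nat.eq_zero_or_pos n.toNat with h1 | h1
      · simp [h1]
      · exact Real.log_natCast_nonneg _
    · exact Real.log_le_log (by exact_mod_cast h0) (by exact_mod_cast hmn)

lemma thickNum_le_coverNum {E : Type*} [NormedAddCommGroup E] [NormedSpace ℝ E]
    (X : Set E) (ε : ℝ) : thickNum X ε ≤ coverNum X ε := by
  apply le_sInf
  rintro n ⟨F, hFX, hcov, rfl⟩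
  have h1 : thickNum X ε ≤ (Module.finrank ℝ (Submodule.span ℝ (F : Set E)) : ℕ∞) := by
    apply sInf_le
    refine ⟨Submodule.span ℝ (F : Set E), inferInstance, rfl, ?_⟩
    intro x hx
    obtain ⟨c, hcF, hxc⟩ := by simpa using hcov hx
    calc Metric.infDist x (Submodule.span ℝ (F : Set E) : Set E) ≤ dist x c :=
          Metric.infDist_le_dist_of_mem (Submodule.subset_span hcF)
      _ ≤ ε := le_of_lt hxc
  refine h1.trans ?_
  exact_mod_cast finrank_span_finset_le_card F

/-- the thickness exponent is bounded above by the box-counting dimension. -/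
theorem thickness_le_dimBox {B : Type*} [NormedAddCommGroup B] [NormedSpace ℝ B] [CompleteSpace B]
    (X : Set B) (hX : IsCompact X) :
    thickness X ≤ dimBox X := by
  apply Filter.limsup_le_limsup
  filter_upwards [Ioo_mem_nhdsGT_of_mem (by simp : (0:ℝ) ∈ Ico (0:ℝ) 1)] with ε hε
  have hden : (0 : EReal) ≤ ((-Real.log ε : ℝ) : EReal) := by
    exact_mod_cast neg_nonneg.2 (Real.log_nonpos hε.1.le hε.2.le)
  exact EReal.div_le_div_right_of_nonneg hden (elog_mono (thickNum_le_coverNum X ε))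
  · isBoundedDefault
  · isBoundedDefault
end

section
/- Let X be a compact subset of a Banach space B with finite box-counting dimension, and let d > d_B(X). Then for every n ∈ ℕ there exist m_n ≤ C·2^{2nd} (for a constant C depending on d) and a bounded linear map φ_n : B → ℝ^{m_n} with operator norm ‖φ_n‖ ≤ √(m_n) such that |φ_n(x − y)| ≥ 2^{−(n+1)} whenever x, y ∈ X satisfy ‖x − y‖ ≥ 2^{−n}. -/
open Filter Metric Set Pointwise Topology

/-! Cover `X` by `N ≤ r^{-d'}` balls of radius `r = 2^{-(n+3)}`, for some `d_B(X) < d' < d`.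
The differences of the centres are at most `N²` points whose `2r`-balls cover `X - X`; the map
whose coordinates are norm-one Hahn–Banach functionals attaining the norms of these points has
norm at most `√m` and sends `x - y` to a vector of length at least `‖x - y‖ - 4r`. -/

section Covers

variable {E : Type*} [SeminormedAddCommGroup E] {X : Set E} {ε : ℝ}

lemma exists_finset_card_eq_coverNum (h : coverNum X ε ≠ ⊤) :
    ∃ F : Finset E, ↑F ⊆ X ∧ (X ⊆ ⋃ c ∈ F, ball c ε) ∧ (F.card : ℕ∞) = coverNum X ε := by
  have hne : {n : ℕ∞ | ∃ F : Finset E, ↑F ⊆ X ∧ (X ⊆ ⋃ c ∈ F, ball c ε) ∧ n = F.card}.Nonempty := by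
    by_contra hempty
    rw [not_nonempty_iff_eq_empty] at hempty
    simp [coverNum, hempty] at h
  obtain ⟨F, hFX, hcov, hF⟩ := csInf_mem hne
  exact ⟨F, hFX, hcov, hF.symm⟩

lemma natCast_le_rpow_neg_of_elog_div_lt {k : ℕ} {d : ℝ} (hε₀ : 0 < ε) (hε₁ : ε < 1)
    (h : elog k / ((-Real.log ε : ℝ) : EReal) < d) : (k : ℝ) ≤ ε ^ (-d) := by
  have hlog : 0 < -Real.log ε := neg_pos.2 (Real.log_neg hε₀ hε₁)
  rw [elog, if_neg (ENat.natCast_ne_top k), ENat.toNat_natCast, ← EReal.coe_div,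
    EReal.coe_lt_coe_iff, div_lt_iff₀ hlog] at h
  rcases k.eq_zero_or_pos with rfl | hk
  · simpa using (Real.rpow_pos_of_pos hε₀ _).le
  · rw [← Real.log_le_log_iff (by exact_mod_cast hk) (Real.rpow_pos_of_pos hε₀ _),
      Real.log_rpow hε₀]
    linarith

lemma eventually_exists_finset_cover_card_le {d : ℝ} (h : dimBox X < d) :
    ∀ᶠ ε in 𝓝[>] 0, ∃ F : Finset E, (X ⊆ ⋃ c ∈ F, ball c ε) ∧ (F.card : ℝ) ≤ ε ^ (-d) := by
  filter_upwards [eventually_lt_of_limsup_lt h, Ioo_mem_nhdsGT one_pos] with ε hlt hε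
  have hlog : 0 < -Real.log ε := neg_pos.2 (Real.log_neg hε.1 hε.2)
  have htop : coverNum X ε ≠ ⊤ := by
    intro htop
    rw [htop, elog, if_pos rfl,
      EReal.top_div_of_pos_ne_top (EReal.coe_pos.2 hlog) (EReal.coe_ne_top _)] at hlt
    exact not_top_lt hlt
  obtain ⟨F, -, hcov, hF⟩ := exists_finset_card_eq_coverNum htop
  rw [← hF] at hlt
  exact ⟨F, hcov, natCast_le_rpow_neg_of_elog_div_lt hε.1 hε.2 hlt⟩

end Covers

section Separation

variable {E : Type*} [NormedAddCommGroup E] [NormedSpace ℝ E]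

lemma exists_clm_euclidean_norming {ι : Type*} [Fintype ι] (z : ι → E) :
    ∃ φ : E →L[ℝ] EuclideanSpace ℝ ι, ‖φ‖ ≤ √(Fintype.card ι) ∧
      ∀ v i, ‖v‖ - 2 * ‖v - z i‖ ≤ ‖φ v‖ := by
  choose f hf₁ hf₂ using fun i => exists_dual_vector'' ℝ (z i)
  let φ : E →L[ℝ] EuclideanSpace ℝ ι :=
    (EuclideanSpace.equiv ι ℝ).symm.toContinuousLinearMap.comp (ContinuousLinearMap.pi f)
  have hφ : ∀ v i, φ v i = f i v := fun _ _ => rfl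
  refine ⟨φ, φ.opNorm_le_bound (Real.sqrt_nonneg _) fun v => ?_, fun v i => ?_⟩
  · have hsq : ‖φ v‖ ^ 2 ≤ (√(Fintype.card ι) * ‖v‖) ^ 2 := by
      rw [EuclideanSpace.norm_sq_eq, mul_pow, Real.sq_sqrt (Nat.cast_nonneg _)]
      calc ∑ i, ‖φ v i‖ ^ 2 ≤ ∑ _i : ι, ‖v‖ ^ 2 := by
            gcongr with i
            simpa [hφ] using (f i).le_of_opNorm_le (hf₁ i) v
        _ = Fintype.card ι * ‖v‖ ^ 2 := by simp
    exact (pow_le_pow_iff_left₀ (norm_nonneg _) (by positivity) two_ne_zero).1 hsq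
  · have hdev : -‖v - z i‖ ≤ f i (v - z i) := by
      have := (f i).le_of_opNorm_le (hf₁ i) (v - z i)
      rw [one_mul, Real.norm_eq_abs] at this
      exact neg_le_of_abs_le this
    calc ‖v‖ - 2 * ‖v - z i‖ ≤ ‖z i‖ - ‖v - z i‖ := by
          linarith [norm_le_norm_add_norm_sub' v (z i)]
      _ ≤ f i v := by
          have hzi : f i (z i) = ‖z i‖ := by simpa using hf₂ i
          rw [← hzi, ← sub_add_cancel v (z i), map_add, add_sub_cancel_right]
          linarith
      _ ≤ ‖φ v‖ := (le_abs_self _).trans (PiLp.norm_apply_le (φ v) i)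

lemma exists_clm_of_finset_cover [DecidableEq E] {X : Set E} {F : Finset E} {r : ℝ}
    (hX : X ⊆ ⋃ c ∈ F, ball c r) :
    ∃ φ : E →L[ℝ] EuclideanSpace ℝ (Fin (F - F).card), ‖φ‖ ≤ √((F - F).card) ∧
      ∀ x ∈ X, ∀ y ∈ X, ‖x - y‖ - 4 * r ≤ ‖φ (x - y)‖ := by
  obtain ⟨φ, hφ, hsep⟩ := exists_clm_euclidean_norming fun i => ((F - F).equivFin.symm i : E)
  refine ⟨φ, by simpa using hφ, fun x hx y hy => ?_⟩
  obtain ⟨a, ha, hxa⟩ := mem_iUnion₂.1 (hX hx)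
  obtain ⟨b, hb, hyb⟩ := mem_iUnion₂.1 (hX hy)
  have hclose : ‖(x - y) - (a - b)‖ < 2 * r := by
    rw [mem_ball, dist_eq_norm] at hxa hyb
    calc ‖(x - y) - (a - b)‖ = ‖(x - a) - (y - b)‖ := by congr 1; abel
      _ ≤ ‖x - a‖ + ‖y - b‖ := norm_sub_le _ _
      _ < 2 * r := by linarith
  have := hsep (x - y) ((F - F).equivFin ⟨a - b, Finset.sub_mem_sub ha hb⟩)
  rw [Equiv.symm_apply_apply] at this
  linarith

lemma exists_separating_clm_of_cover [DecidableEq E] (n : ℕ) {X : Set E} {F : Finset E} {r : ℝ}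
    (hr : r ≤ 2 ^ (-((n : ℝ) + 3))) (hX : X ⊆ ⋃ c ∈ F, ball c r) :
    ∃ φ : E →L[ℝ] EuclideanSpace ℝ (Fin (F - F).card), ‖φ‖ ≤ √((F - F).card) ∧
      ∀ x ∈ X, ∀ y ∈ X, (2 : ℝ) ^ (-(n : ℝ)) ≤ ‖x - y‖ →
        (2 : ℝ) ^ (-((n : ℝ) + 1)) ≤ ‖φ (x - y)‖ := by
  obtain ⟨φ, hφ, hsep⟩ := exists_clm_of_finset_cover hX
  refine ⟨φ, hφ, fun x hx y hy hxy => ?_⟩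
  have h₁ : (2 : ℝ) ^ (-((n : ℝ) + 1)) = 2 ^ (-(n : ℝ)) / 2 := by
    rw [neg_add, Real.rpow_add two_pos]; norm_num; ring
  have h₃ : (2 : ℝ) ^ (-((n : ℝ) + 3)) = 2 ^ (-(n : ℝ)) / 8 := by
    rw [neg_add, Real.rpow_add two_pos]; norm_num; ring
  linarith [hsep x hx y hy]

end Separation

lemma natCast_card_sub_le {E : Type*} [AddGroup E] [DecidableEq E] {F : Finset E} {n : ℕ}
    {d' d : ℝ} (hd : d' ≤ d) (hF : (F.card : ℝ) ≤ ((2 : ℝ) ^ (-((n : ℝ) + 3))) ^ (-d')) :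
    ((F - F).card : ℝ) ≤ 2 ^ (6 * d') * 2 ^ (2 * (n : ℝ) * d) := by
  rw [← Real.rpow_mul zero_le_two, neg_mul_neg] at hF
  calc ((F - F).card : ℝ) ≤ F.card * F.card := by exact_mod_cast Finset.card_sub_le
    _ ≤ 2 ^ (((n : ℝ) + 3) * d') * 2 ^ (((n : ℝ) + 3) * d') := by gcongr
    _ = 2 ^ (6 * d') * 2 ^ (2 * (n : ℝ) * d') := by
      rw [← Real.rpow_add two_pos, ← Real.rpow_add two_pos]; ring_nf
    _ ≤ 2 ^ (6 * d') * 2 ^ (2 * (n : ℝ) * d) := by gcongr; norm_num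

lemma tendsto_two_rpow_neg_add_three :
    Tendsto (fun n : ℕ => (2 : ℝ) ^ (-((n : ℝ) + 3))) atTop (𝓝[>] 0) :=
  tendsto_nhdsWithin_iff.2
    ⟨(tendsto_rpow_atBot_of_base_gt_one 2 one_lt_two).comp <| tendsto_neg_atTop_atBot.comp <|
        tendsto_atTop_add_const_right _ 3 tendsto_natCast_atTop_atTop,
      Eventually.of_forall fun _ => Real.rpow_pos_of_pos two_pos _⟩

lemma exists_pos_forall_le_mul_of_eventually {P : ℕ → ℕ → Prop} {g : ℕ → ℝ}
    (hg : ∀ n, 0 < g n) (hP : ∀ n, ∃ m, P n m) {C₀ : ℝ}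
    (hC₀ : ∀ᶠ n in atTop, ∃ m : ℕ, (m : ℝ) ≤ C₀ * g n ∧ P n m) :
    ∃ C > 0, ∀ n, ∃ m : ℕ, (m : ℝ) ≤ C * g n ∧ P n m := by
  obtain ⟨N, hN⟩ := eventually_atTop.1 hC₀
  choose m hm using hP
  set S := ∑ k ∈ Finset.range N, (m k : ℝ) / g k
  have hS : 0 ≤ S := Finset.sum_nonneg fun k _ => div_nonneg (Nat.cast_nonneg _) (hg k).le
  refine ⟨max C₀ 1 + S, by positivity, fun n => ?_⟩
  rcases lt_or_ge n N with hn | hn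
  · refine ⟨m n, ?_, hm n⟩
    have : (m n : ℝ) / g n ≤ S :=
      Finset.single_le_sum (fun k _ => div_nonneg (Nat.cast_nonneg _) (hg k).le)
        (Finset.mem_range.2 hn)
    rw [← div_le_iff₀ (hg n)]
    linarith [le_max_right C₀ 1]
  · obtain ⟨k, hk, hPk⟩ := hN n hn
    refine ⟨k, hk.trans ?_, hPk⟩
    gcongr
    · exact (hg n).le
    · linarith [le_max_left C₀ 1]

theorem exists_finite_rank_separating_maps_general {B : Type*}
    [NormedAddCommGroup B] [NormedSpace ℝ B]
    (X : Set B)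
    (d : ℝ) (hd : dimBox X < (d : EReal)) :
    ∃ C > (0 : ℝ), ∀ n : ℕ, ∃ m : ℕ,
      (m : ℝ) ≤ C * (2 : ℝ) ^ (2 * (n : ℝ) * d) ∧
      ∃ φ : B →L[ℝ] EuclideanSpace ℝ (Fin m),
        ‖φ‖ ≤ Real.sqrt m ∧
        ∀ x ∈ X, ∀ y ∈ X, (2 : ℝ) ^ (-(n : ℝ)) ≤ ‖x - y‖ →
          (2 : ℝ) ^ (-((n : ℝ) + 1)) ≤ ‖φ (x - y)‖ := by
  classical
  obtain ⟨d', hd', hd'd⟩ := EReal.exists_between_coe_real hd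
  have hcov := eventually_exists_finset_cover_card_le hd'
  refine exists_pos_forall_le_mul_of_eventually (fun _ => Real.rpow_pos_of_pos two_pos _)
    (fun n => ?_) (C₀ := 2 ^ (6 * d')) ?_
  · obtain ⟨r, ⟨F, hF, -⟩, hr⟩ :=
      (hcov.and (Ioo_mem_nhdsGT (Real.rpow_pos_of_pos two_pos (-((n : ℝ) + 3))))).exists
    exact ⟨_, exists_separating_clm_of_cover n hr.2.le hF⟩
  · filter_upwards [tendsto_two_rpow_neg_add_three.eventually hcov] with n ⟨F, hF, hcard⟩
    exact ⟨_, natCast_card_sub_le (EReal.coe_lt_coe_iff.1 hd'd).le hcard,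
      exists_separating_clm_of_cover n le_rfl hF⟩

/-- for `d > d_B(X)` there are linear maps `φ_n : B → ℝ^{m_n}`,
`m_n ≤ C 2^{2nd}`, `‖φ_n‖ ≤ √m_n`, with `|φ_n(x - y)| ≥ 2^{-(n+1)}` whenever
`x, y ∈ X` satisfy `‖x - y‖ ≥ 2^{-n}`. -/
theorem exists_finite_rank_separating_maps {B : Type*}
    [NormedAddCommGroup B] [NormedSpace ℝ B] [CompleteSpace B]
    (X : Set B) (hX : IsCompact X) (hfin : dimBox X < ⊤)
    (d : ℝ) (hd : dimBox X < (d : EReal)) :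
    ∃ C > (0 : ℝ), ∀ n : ℕ, ∃ m : ℕ,
      (m : ℝ) ≤ C * (2 : ℝ) ^ (2 * (n : ℝ) * d) ∧
      ∃ φ : B →L[ℝ] EuclideanSpace ℝ (Fin m),
        ‖φ‖ ≤ Real.sqrt m ∧
        ∀ x ∈ X, ∀ y ∈ X, (2 : ℝ) ^ (-(n : ℝ)) ≤ ‖x - y‖ →
          (2 : ℝ) ^ (-((n : ℝ) + 1)) ≤ ‖φ (x - y)‖ :=
  exists_finite_rank_separating_maps_general X d hd
end

section
/- Let X be a compact subset of a Banach space B with finite box-counting dimension. Then for every α > 1 + d_B(X) there exist a separable Hilbert space H, a bounded linear map Φ : B → H, and a constant C_α > 0 such that C_α^{-1}‖x − y‖^α ≤ ‖Φ(x) − Φ(y)‖_H ≤ C_α‖x − y‖ for all x, y ∈ X. -/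
/-!
Fix `D` with `d_B(X) < D < α - 1`, so that for small `ε` the set `X` is covered by at most
`ε ^ (-D)` balls of radius `ε`. At the dyadic scales `r n = ρ / 2 ^ n` take such a cover by balls
of radius `r n / 8` and, for every pair `(a, b)` of its centres, a norming functional of `a - b`.
Weighted by `r n ^ (α - 1)`, these countably many functionals define a bounded map `Φ` into `ℓ²`:
scale `n` contributes at most `8 ^ (2D) * r n ^ (2 (α - 1 - D))` to the sum of squared norms, a
geometric series. If `r n ≤ ‖x - y‖ < 2 r n`, the functional of the pair of centres near `x` and
`y` sees at least half of `x - y`, so `‖Φ x - Φ y‖ ≥ r n ^ (α - 1) ‖x - y‖ / 2 ≳ ‖x - y‖ ^ α`.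
-/

open Filter Metric Set Pointwise Topology

section LpTwo

variable {ι 𝕜 E : Type*}

theorem HilbertBasis.separableSpace [RCLike 𝕜] [NormedAddCommGroup E] [InnerProductSpace 𝕜 E]
    [Countable ι] (b : HilbertBasis ι 𝕜 E) : TopologicalSpace.SeparableSpace E := by
  rw [← TopologicalSpace.isSeparable_univ_iff, ← Submodule.top_coe (R := 𝕜), ← b.dense_span,
    Submodule.topologicalClosure_coe]
  exact (Set.countable_range b).isSeparable.span.closure

variable [NontriviallyNormedField 𝕜] [SeminormedAddCommGroup E] [NormedSpace 𝕜 E]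

theorem ContinuousLinearMap.sq_norm_apply_le (φ : E →L[𝕜] 𝕜) (v : E) :
    ‖φ v‖ ^ 2 ≤ ‖φ‖ ^ 2 * ‖v‖ ^ 2 := by
  rw [← mul_pow]
  gcongr
  exact φ.le_opNorm v

theorem summable_sq_norm_apply {ψ : ι → E →L[𝕜] 𝕜} (hψ : Summable fun i => ‖ψ i‖ ^ 2) (v : E) :
    Summable fun i => ‖ψ i v‖ ^ 2 :=
  (hψ.mul_right _).of_nonneg_of_le (fun _ => by positivity) fun i => (ψ i).sq_norm_apply_le v

noncomputable def lpTwoMap (ψ : ι → E →L[𝕜] 𝕜) (hψ : Summable fun i => ‖ψ i‖ ^ 2) :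
    E →L[𝕜] lp (fun _ : ι => 𝕜) 2 :=
  LinearMap.mkContinuous
    { toFun := fun v => ⟨fun i => ψ i v, memℓp_gen <| by
        simpa only [ENNReal.toReal_ofNat, Real.rpow_two] using summable_sq_norm_apply hψ v⟩
      map_add' := fun u v => lp.ext <| funext fun i => map_add (ψ i) u v
      map_smul' := fun c v => lp.ext <| funext fun i => map_smul (ψ i) c v }
    √(∑' i, ‖ψ i‖ ^ 2) fun v => by
      refine lp.norm_le_of_tsum_le (by norm_num) (by positivity) ?_
      simp only [ENNReal.toReal_ofNat, Real.rpow_two, LinearMap.coe_mk, AddHom.coe_mk, mul_pow,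
        Real.sq_sqrt (tsum_nonneg fun i => sq_nonneg ‖ψ i‖), ← tsum_mul_right]
      exact (summable_sq_norm_apply hψ v).tsum_le_tsum (fun i => (ψ i).sq_norm_apply_le v)
        (hψ.mul_right _)

@[simp]
theorem lpTwoMap_apply (ψ : ι → E →L[𝕜] 𝕜) (hψ : Summable fun i => ‖ψ i‖ ^ 2) (v : E) (i : ι) :
    lpTwoMap ψ hψ v i = ψ i v :=
  rfl

end LpTwo

section BoxDimension

variable {E : Type*} [SeminormedAddCommGroup E]

theorem elog_nonneg (n : ℕ∞) : 0 ≤ elog n := by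
  unfold elog
  split_ifs
  · exact le_top
  · exact EReal.coe_nonneg.2 (Real.log_natCast_nonneg _)

theorem dimBox_nonneg (X : Set E) : 0 ≤ dimBox X := by
  refine le_limsup_of_frequently_le (Eventually.frequently ?_) (by isBoundedDefault)
  filter_upwards [Ioo_mem_nhdsGT one_pos] with ε hε
  exact EReal.div_nonneg (elog_nonneg _)
    (EReal.coe_nonneg.2 (neg_nonneg.2 (Real.log_nonpos hε.1.le hε.2.le)))

theorem exists_eq_and_le_rpow_of_elog_div_lt {N : ℕ∞} {ε D : ℝ} (hε₀ : 0 < ε) (hε₁ : ε < 1)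
    (h : elog N / ((-Real.log ε : ℝ) : EReal) < D) : ∃ k : ℕ, N = k ∧ (k : ℝ) ≤ ε ^ (-D) := by
  have hlog : 0 < -Real.log ε := neg_pos.2 (Real.log_neg hε₀ hε₁)
  induction N using ENat.recTopCoe with
  | top =>
    rw [elog, if_pos rfl,
      EReal.top_div_of_pos_ne_top (EReal.coe_pos.2 hlog) (EReal.coe_ne_top _)] at h
    exact absurd h not_top_lt
  | coe k =>
    refine ⟨k, rfl, ?_⟩
    rw [elog, if_neg (ENat.natCast_ne_top k), ENat.toNat_natCast, ← EReal.coe_div,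
      EReal.coe_lt_coe_iff, div_lt_iff₀ hlog] at h
    rcases k.eq_zero_or_pos with rfl | hk
    · simpa using Real.rpow_nonneg hε₀.le _
    · rw [← Real.exp_log (Nat.cast_pos.2 hk), Real.rpow_def_of_pos hε₀]
      exact Real.exp_le_exp.2 (by linarith)

theorem exists_finset_card_eq_of_coverNum_eq {X : Set E} {ε : ℝ} {k : ℕ} (h : coverNum X ε = k) :
    ∃ F : Finset E, X ⊆ ⋃ c ∈ F, ball c ε ∧ F.card = k := by
  have hne : {n : ℕ∞ | ∃ F : Finset E, ↑F ⊆ X ∧ (X ⊆ ⋃ c ∈ F, ball c ε) ∧ n = F.card}.Nonempty :=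
    Set.nonempty_iff_ne_empty.2 fun he => by simp [coverNum, he] at h
  obtain ⟨F, -, hcov, hF⟩ := csInf_mem hne
  exact ⟨F, hcov, by rw [coverNum] at h; exact_mod_cast hF.symm.trans h⟩

theorem eventually_exists_finset_cover_card_le_rpow {X : Set E} {D : ℝ} (h : dimBox X < D) :
    ∀ᶠ ε in 𝓝[>] 0, ∃ F : Finset E, X ⊆ ⋃ c ∈ F, ball c ε ∧ (F.card : ℝ) ≤ ε ^ (-D) := by
  filter_upwards [eventually_lt_of_limsup_lt h, Ioo_mem_nhdsGT one_pos] with ε hε hε₀₁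
  obtain ⟨k, hk, hkD⟩ := exists_eq_and_le_rpow_of_elog_div_lt hε₀₁.1 hε₀₁.2 hε
  obtain ⟨F, hcov, rfl⟩ := exists_finset_card_eq_of_coverNum_eq hk
  exact ⟨F, hcov, hkD⟩

end BoxDimension

section Multiscale

variable {E : Type*} [NormedAddCommGroup E] [NormedSpace ℝ E]

theorem norm_sub_div_two_le_apply_sub {φ : E →L[ℝ] ℝ} (hφ : ‖φ‖ ≤ 1) {a b x y : E}
    (hab : φ (a - b) = ‖a - b‖) {ε : ℝ} (hx : ‖x - a‖ ≤ ε) (hy : ‖y - b‖ ≤ ε)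
    (hε : 8 * ε ≤ ‖x - y‖) : ‖x - y‖ / 2 ≤ φ (x - y) := by
  have hφerr : |φ ((x - a) - (y - b))| ≤ ‖x - a‖ + ‖y - b‖ :=
    calc |φ ((x - a) - (y - b))| ≤ ‖φ‖ * ‖(x - a) - (y - b)‖ := φ.le_opNorm _
      _ ≤ 1 * (‖x - a‖ + ‖y - b‖) := by gcongr; exact norm_sub_le _ _
      _ = ‖x - a‖ + ‖y - b‖ := one_mul _
  have hab' : ‖x - y‖ ≤ ‖a - b‖ + (‖x - a‖ + ‖y - b‖) :=
    calc ‖x - y‖ = ‖(a - b) + ((x - a) - (y - b))‖ := by congr 1; abel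
      _ ≤ ‖a - b‖ + (‖x - a‖ + ‖y - b‖) :=
        (norm_add_le _ _).trans (by gcongr; exact norm_sub_le _ _)
  have hφxy : φ (x - y) = ‖a - b‖ + φ ((x - a) - (y - b)) := by
    rw [← hab, ← map_add]
    congr 1
    abel
  linarith [neg_abs_le (φ ((x - a) - (y - b)))]

theorem summable_sigma_fin_prod_sq {m : ℕ → ℕ} {w : ℕ → ℝ}
    (hw : Summable fun n => ((m n : ℝ) * w n) ^ 2) :
    Summable fun k : Σ n, Fin (m n) × Fin (m n) => w k.1 ^ 2 := by
  refine (summable_sigma_of_nonneg fun _ => sq_nonneg _).2 ⟨fun n => .of_finite, ?_⟩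
  convert hw using 2 with n
  simp only [tsum_fintype, Finset.sum_const, Finset.card_univ, Fintype.card_prod, Fintype.card_fin,
    nsmul_eq_mul, Nat.cast_mul]
  ring

theorem exists_lp_map_of_finset_covers {X : Set E} (F : ℕ → Finset E) (r w : ℕ → ℝ)
    (hcov : ∀ n, X ⊆ ⋃ c ∈ F n, ball c (r n / 8))
    (hw : Summable fun n => ((F n).card * w n) ^ 2) :
    ∃ (ι : Type) (_ : Countable ι) (T : E →L[ℝ] lp (fun _ : ι => ℝ) 2),
      ∀ x ∈ X, ∀ y ∈ X, ∀ n, r n ≤ ‖x - y‖ → |w n| * ‖x - y‖ / 2 ≤ ‖T x - T y‖ := by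
  choose φ hφ₁ hφ using fun v : E => exists_dual_vector'' ℝ v
  let z (n : ℕ) (i : Fin (F n).card) : E := (F n).equivFin.symm i
  let ψ (k : Σ n, Fin (F n).card × Fin (F n).card) : E →L[ℝ] ℝ :=
    w k.1 • φ (z k.1 k.2.1 - z k.1 k.2.2)
  have hψ : Summable fun k => ‖ψ k‖ ^ 2 := by
    refine (summable_sigma_fin_prod_sq hw).of_nonneg_of_le (fun _ => sq_nonneg _) fun k => ?_
    rw [norm_smul, Real.norm_eq_abs, mul_pow, ← sq_abs (w k.1)]
    exact mul_le_of_le_one_right (sq_nonneg _) (pow_le_one₀ (norm_nonneg _) (hφ₁ _))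
  refine ⟨_, inferInstance, lpTwoMap ψ hψ, fun x hx y hy n hn => ?_⟩
  obtain ⟨a, ha, hxa⟩ := mem_iUnion₂.1 (hcov n hx)
  obtain ⟨b, hb, hyb⟩ := mem_iUnion₂.1 (hcov n hy)
  rw [mem_ball, dist_eq_norm] at hxa hyb
  let k : Σ n, Fin (F n).card × Fin (F n).card :=
    ⟨n, (F n).equivFin ⟨a, ha⟩, (F n).equivFin ⟨b, hb⟩⟩
  have hsep : ‖x - y‖ / 2 ≤ φ (a - b) (x - y) :=
    norm_sub_div_two_le_apply_sub (hφ₁ _) (hφ _) hxa.le hyb.le (by linarith)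
  calc |w n| * ‖x - y‖ / 2 ≤ |w n| * |φ (a - b) (x - y)| := by
        rw [mul_div_assoc]
        exact mul_le_mul_of_nonneg_left (hsep.trans (le_abs_self _)) (abs_nonneg _)
    _ = ‖lpTwoMap ψ hψ (x - y) k‖ := by simp [ψ, z, k, ← mul_sub]
    _ ≤ ‖lpTwoMap ψ hψ (x - y)‖ := lp.norm_apply_le_norm two_ne_zero _ k
    _ = ‖lpTwoMap ψ hψ x - lpTwoMap ψ hψ y‖ := by rw [map_sub]

end Multiscale

theorem summable_div_two_pow_rpow {ρ s : ℝ} (hρ : 0 ≤ ρ) (hs : 0 < s) :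
    Summable fun n : ℕ => (ρ / 2 ^ n) ^ s := by
  have h : ∀ n : ℕ, (ρ / 2 ^ n) ^ s = ρ ^ s * ((1 / 2) ^ s) ^ n := fun n => by
    rw [div_eq_mul_one_div, ← one_div_pow, Real.mul_rpow hρ (by positivity),
      Real.rpow_pow_comm (by norm_num)]
  simp_rw [h]
  exact (summable_geometric_of_lt_one (by positivity)
    (Real.rpow_lt_one (by norm_num) (by norm_num) hs)).mul_left _

theorem summable_sq_mul_rpow_of_le_rpow {N : ℕ → ℕ} {ρ D β : ℝ} (hρ : 0 < ρ) (hDβ : D < β)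
    (hN : ∀ n, (N n : ℝ) ≤ (ρ / 2 ^ n / 8) ^ (-D)) :
    Summable fun n => ((N n : ℝ) * (ρ / 2 ^ n) ^ β) ^ 2 := by
  refine ((summable_div_two_pow_rpow hρ.le (s := (β - D) * (2 : ℕ))
    (mul_pos (sub_pos.2 hDβ) two_pos)).mul_left
    (((8 : ℝ) ^ D) ^ 2)).of_nonneg_of_le (fun _ => sq_nonneg _) fun n => ?_
  have hr : 0 < ρ / 2 ^ n := by positivity
  have hbound : (N n : ℝ) * (ρ / 2 ^ n) ^ β ≤ (8 : ℝ) ^ D * (ρ / 2 ^ n) ^ (β - D) :=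
    calc (N n : ℝ) * (ρ / 2 ^ n) ^ β ≤ (ρ / 2 ^ n / 8) ^ (-D) * (ρ / 2 ^ n) ^ β := by
          gcongr
          exact hN n
      _ = (8 : ℝ) ^ D * (ρ / 2 ^ n) ^ (β - D) := by
          rw [Real.div_rpow hr.le (by norm_num), Real.rpow_neg (by norm_num : (0 : ℝ) ≤ 8),
            div_inv_eq_mul, sub_eq_neg_add, Real.rpow_add hr]
          ring
  rw [Real.rpow_mul_natCast hr.le, ← mul_pow]
  gcongr

theorem exists_div_two_pow_le_and_min_le {ρ d : ℝ} (hρ : 0 < ρ) (hd : 0 < d) :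
    ∃ n : ℕ, ρ / 2 ^ n ≤ d ∧ min ρ (d / 2) ≤ ρ / 2 ^ n := by
  rcases le_or_gt ρ d with hρd | hdρ
  · exact ⟨0, by simpa using hρd, by simp⟩
  obtain ⟨n, hlt, hle⟩ := exists_nat_pow_near_of_lt_one (div_pos hd hρ)
    ((div_le_one hρ).2 hdρ.le) (by norm_num : (0 : ℝ) < 1 / 2) (by norm_num)
  rw [one_div_pow, lt_div_iff₀ hρ] at hlt
  rw [one_div_pow, div_le_iff₀ hρ] at hle
  refine ⟨n + 1, ?_, min_le_of_right_le ?_⟩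
  · calc ρ / 2 ^ (n + 1) = 1 / 2 ^ (n + 1) * ρ := by ring
      _ ≤ d := hlt.le
  · calc d / 2 ≤ 1 / 2 ^ n * ρ / 2 := by gcongr
      _ = ρ / 2 ^ (n + 1) := by ring

theorem rpow_le_of_forall_div_two_pow_le {ρ M α d t : ℝ} (hρ : 0 < ρ) (hα : 1 ≤ α) (hd : 0 ≤ d)
    (hdM : d ≤ M) (ht : 0 ≤ t) (h : ∀ n : ℕ, ρ / 2 ^ n ≤ d → (ρ / 2 ^ n) ^ (α - 1) * d / 2 ≤ t) :
    d ^ α ≤ 2 * (2 * max 1 (M / ρ)) ^ (α - 1) * t := by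
  rcases hd.eq_or_lt with rfl | hd
  · rw [Real.zero_rpow (by linarith)]
    positivity
  obtain ⟨n, hnd, hmin⟩ := exists_div_two_pow_le_and_min_le hρ hd
  set r := ρ / 2 ^ n
  set L := max 1 (M / ρ)
  have hL : 1 ≤ L := le_max_left _ _
  have hr : 0 < r := by positivity
  have hdr : d ≤ 2 * L * r := by
    rcases min_le_iff.1 hmin with hρr | hdr
    · calc d ≤ M / ρ * ρ := by rwa [div_mul_cancel₀ _ hρ.ne']
        _ ≤ L * r := by gcongr; exact le_max_right _ _
        _ ≤ 2 * L * r := by nlinarith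
    · nlinarith
  calc d ^ α = d ^ (α - 1) * d := by rw [Real.rpow_sub_one hd.ne', div_mul_cancel₀ _ hd.ne']
    _ ≤ (2 * L * r) ^ (α - 1) * d := by gcongr
    _ = 2 * (2 * L) ^ (α - 1) * (r ^ (α - 1) * d / 2) := by
        rw [Real.mul_rpow (by positivity) (by positivity)]
        ring
    _ ≤ 2 * (2 * L) ^ (α - 1) * t := by gcongr; exact h n hnd

theorem exists_real_btwn_of_one_add_lt {a : EReal} {b : ℝ} (h : 1 + a < b) :
    ∃ D : ℝ, a < D ∧ D < b - 1 := by
  have hab : a < ((b - 1 : ℝ) : EReal) := by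
    rw [EReal.coe_sub,
      EReal.lt_sub_iff_add_lt (.inl (EReal.coe_ne_bot 1)) (.inl (EReal.coe_ne_top 1)), add_comm]
    exact_mod_cast h
  obtain ⟨D, haD, hDb⟩ := EReal.lt_iff_exists_real_btwn.1 hab
  exact ⟨D, haD, EReal.coe_lt_coe_iff.1 hDb⟩

theorem exists_hilbert_embedding_of_dimBox_general {B : Type*}
    [NormedAddCommGroup B] [NormedSpace ℝ B]
    (X : Set B) (hX : IsCompact X)
    (α : ℝ) (hα : 1 + dimBox X < (α : EReal)) :
    ∃ (H : Type) (_ : NormedAddCommGroup H) (_ : InnerProductSpace ℝ H),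
      CompleteSpace H ∧ TopologicalSpace.SeparableSpace H ∧
      ∃ (Φ : B →L[ℝ] H) (C : ℝ), 0 < C ∧
        ∀ x ∈ X, ∀ y ∈ X,
          C⁻¹ * ‖x - y‖ ^ α ≤ ‖Φ x - Φ y‖ ∧ ‖Φ x - Φ y‖ ≤ C * ‖x - y‖ := by
  obtain ⟨D, hXD, hDα⟩ := exists_real_btwn_of_one_add_lt hα
  have hα₁ : 1 < α := by
    have hD : (0 : ℝ) < D := EReal.coe_pos.1 ((dimBox_nonneg X).trans_lt hXD)
    linarith
  obtain ⟨ρ, hρ : 0 < ρ, hnet⟩ :=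
    mem_nhdsGT_iff_exists_Ioc_subset.1 (eventually_exists_finset_cover_card_le_rpow hXD)
  have hr : ∀ n : ℕ, ρ / 2 ^ n / 8 ∈ Ioc 0 ρ := fun n => ⟨by positivity,
    (div_le_self (by positivity) (by norm_num)).trans (div_le_self hρ.le (one_le_pow₀ one_le_two))⟩
  choose F hFcov hFcard using fun n => hnet (hr n)
  obtain ⟨ι, _, T, hT⟩ := exists_lp_map_of_finset_covers F (fun n => ρ / 2 ^ n)
    (fun n => (ρ / 2 ^ n) ^ (α - 1)) hFcov (summable_sq_mul_rpow_of_le_rpow hρ hDα hFcard)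
  obtain ⟨M, hM⟩ := isBounded_iff.1 hX.isBounded
  set K := 2 * (2 * max 1 (M / ρ)) ^ (α - 1)
  have hC : 0 < max ‖T‖ K := lt_max_of_lt_right (by positivity)
  refine ⟨_, inferInstance, inferInstance, inferInstance,
    (default : HilbertBasis ι ℝ _).separableSpace, T, max ‖T‖ K, hC, fun x hx y hy => ⟨?_, ?_⟩⟩
  · rw [inv_mul_le_iff₀ hC]
    refine (rpow_le_of_forall_div_two_pow_le hρ hα₁.le (norm_nonneg _)
      (dist_eq_norm x y ▸ hM hx hy) (norm_nonneg _) fun n hn => ?_).trans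
      (by gcongr; exact le_max_right _ _)
    simpa [abs_of_nonneg (Real.rpow_nonneg (by positivity : 0 ≤ ρ / 2 ^ n) _)]
      using hT x hx y hy n hn
  · rw [← map_sub]
    exact (T.le_opNorm _).trans (by gcongr; exact le_max_left _ _)

/-- a compact subset of a Banach space with finite box-counting dimension
embeds linearly into a separable Hilbert space with `α⁻¹`-Hölder inverse, for any
`α > 1 + d_B(X)`. -/
theorem exists_hilbert_embedding_of_dimBox {B : Type*}
    [NormedAddCommGroup B] [NormedSpace ℝ B] [CompleteSpace B]
    (X : Set B) (hX : IsCompact X) (hfin : dimBox X < ⊤)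
    (α : ℝ) (hα : 1 + dimBox X < (α : EReal)) :
    ∃ (H : Type) (_ : NormedAddCommGroup H) (_ : InnerProductSpace ℝ H),
      CompleteSpace H ∧ TopologicalSpace.SeparableSpace H ∧
      ∃ (Φ : B →L[ℝ] H) (C : ℝ), 0 < C ∧
        ∀ x ∈ X, ∀ y ∈ X,
          C⁻¹ * ‖x - y‖ ^ α ≤ ‖Φ x - Φ y‖ ∧ ‖Φ x - Φ y‖ ≤ C * ‖x - y‖ :=
  exists_hilbert_embedding_of_dimBox_general X hX α hα
end

section
/- If Φ : B → H is a bounded injective linear map from a Banach space to a Hilbert space, and X ⊆ B is compact, then the thickness exponent of Φ(X) in H is at most the thickness exponent of X in B: τ(Φ(X); H) ≤ τ(X; B). -/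
open Filter Metric Set Pointwise Topology

/-! A bounded linear map `Φ` sends a subspace `V` approximating `X` within `ε` to the subspace
`Φ(V)`, of no larger dimension, approximating `Φ(X)` within `‖Φ‖ ε`. Hence
`d(Φ(X), c ε) ≤ d(X, ε)` with `c = ‖Φ‖ + 1`, and rescaling `ε` by a constant does not change the
exponent, because `log (c ε) / log ε → 1` as `ε → 0⁺`. -/

lemma elog_mono_s9 : Monotone elog := by
  intro n m h
  rcases eq_or_ne m ⊤ with rfl | hm
  · simp [elog]
  have hn : n ≠ ⊤ := ne_top_of_le_ne_top hm h
  simp only [elog, hn, hm, if_false, EReal.coe_le_coe_iff]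
  rcases Nat.eq_zero_or_pos n.toNat with h0 | h0
  · simpa [h0] using Real.log_natCast_nonneg m.toNat
  · exact Real.log_le_log (by exact_mod_cast h0) (by exact_mod_cast ENat.toNat_le_toNat h hm)

theorem LipschitzWith.infDist_image_le {α β : Type*} [PseudoMetricSpace α] [PseudoMetricSpace β]
    {K : NNReal} {f : α → β} (hf : LipschitzWith K f) (x : α) (s : Set α) :
    infDist (f x) (f '' s) ≤ K * infDist x s := by
  rcases s.eq_empty_or_nonempty with rfl | hs
  · simp
  have := hs.to_subtype
  rw [infDist_eq_iInf (s := s), Real.mul_iInf_of_nonneg K.coe_nonneg]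
  exact le_ciInf fun y =>
    (infDist_le_dist_of_mem (mem_image_of_mem f y.2)).trans (hf.dist_le_mul x y)

theorem thickNum_image_le {E F : Type*} [NormedAddCommGroup E] [NormedSpace ℝ E]
    [NormedAddCommGroup F] [NormedSpace ℝ F] (f : E →L[ℝ] F) (X : Set E) {c : ℝ}
    (hc : ‖f‖ ≤ c) (ε : ℝ) :
    thickNum (f '' X) (c * ε) ≤ thickNum X ε := by
  refine sInf_le_sInf_of_isCoinitialFor ?_
  rintro _ ⟨V, hV, rfl, hVX⟩
  refine ⟨_, ⟨V.map (f : E →ₗ[ℝ] F), inferInstance, rfl, ?_⟩,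
    by exact_mod_cast Submodule.finrank_map_le _ V⟩
  rintro _ ⟨x, hx, rfl⟩
  calc infDist (f x) (V.map (f : E →ₗ[ℝ] F) : Set F) = infDist (f x) (f '' V) := by
        rw [Submodule.map_coe]; rfl
    _ ≤ ‖f‖ * infDist x V := f.lipschitz.infDist_image_le x V
    _ ≤ c * ε := mul_le_mul hc (hVX x hx) infDist_nonneg ((norm_nonneg f).trans hc)

noncomputable def logExponent (u : ℝ → EReal) : EReal :=
  limsup (fun ε : ℝ => u ε / ((-Real.log ε : ℝ) : EReal)) (𝓝[>] 0)

theorem thickness_eq_logExponent {E : Type*} [NormedAddCommGroup E] [NormedSpace ℝ E]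
    (X : Set E) : thickness X = logExponent fun ε => elog (thickNum X ε) :=
  rfl

theorem logExponent_mono {u v : ℝ → EReal} (h : u ≤ v) : logExponent u ≤ logExponent v := by
  refine limsup_le_limsup ?_
  filter_upwards [Ioo_mem_nhdsGT one_pos] with ε hε
  have : 0 ≤ -Real.log ε := neg_nonneg.2 (Real.log_nonpos hε.1.le hε.2.le)
  exact EReal.div_le_div_right_of_nonneg (by exact_mod_cast this) (h ε)

theorem limsup_div_neg_log_mul_le (u : ℝ → EReal) {c : ℝ} (hc : 0 < c) :
    limsup (fun ε => u ε / ((-Real.log (c * ε) : ℝ) : EReal)) (𝓝[>] 0) ≤ logExponent u := by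
  refine EReal.le_of_forall_lt_iff_le.1 fun b hb => ?_
  obtain ⟨b', hb', hb'b⟩ := EReal.exists_between_coe_real hb
  have hneglog : Tendsto (fun ε => -Real.log ε) (𝓝[>] 0) atTop :=
    tendsto_neg_atBot_atTop.comp Real.tendsto_log_nhdsGT_zero
  -- a nonnegative gap means `b' * -log ε ≤ b * -log (c * ε)`
  have hgap : Tendsto (fun ε => (b - b') * -Real.log ε - b * Real.log c) (𝓝[>] 0) atTop :=
    tendsto_atTop_add_const_right _ _
      (hneglog.const_mul_atTop (sub_pos.2 (EReal.coe_lt_coe_iff.1 hb'b)))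
  refine limsup_le_of_le (by isBoundedDefault) ?_
  filter_upwards [eventually_lt_of_limsup_lt hb', self_mem_nhdsWithin,
    hneglog.eventually_gt_atTop 0, hneglog.eventually_gt_atTop (Real.log c),
    hgap.eventually_ge_atTop 0] with ε hu hε hpos hposc hgapε
  have hlog : Real.log (c * ε) = Real.log c + Real.log ε := Real.log_mul hc.ne' (ne_of_gt hε)
  have hpos' : (0 : ℝ) < -Real.log (c * ε) := by rw [hlog]; linarith
  have hu' := (EReal.div_le_iff_le_mul (by exact_mod_cast hpos) (EReal.coe_ne_top _)).1 hu.le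
  rw [EReal.div_le_iff_le_mul (by exact_mod_cast hpos') (EReal.coe_ne_top _), ← EReal.coe_mul]
  rw [← EReal.coe_mul] at hu'
  refine hu'.trans (EReal.coe_le_coe_iff.2 ?_)
  rw [hlog]
  linarith

theorem logExponent_comp_mul_le (u : ℝ → EReal) {c : ℝ} (hc : 0 < c) :
    logExponent (fun ε => u (c * ε)) ≤ logExponent u := by
  have hmap : map (c * ·) (𝓝[>] (0 : ℝ)) = 𝓝[>] 0 := by
    nth_rw 1 [← comap_mulLeft_nhdsGT_zero hc]
    exact map_comap_of_surjective (mulLeft_bijective₀ c hc.ne').surjective _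
  calc logExponent (fun ε => u (c * ε))
      = limsup ((fun δ => u δ / ((-Real.log (c⁻¹ * δ) : ℝ) : EReal)) ∘ (c * ·)) (𝓝[>] 0) := by
        simp only [logExponent, Function.comp_def, inv_mul_cancel_left₀ hc.ne']
    _ = limsup (fun δ => u δ / ((-Real.log (c⁻¹ * δ) : ℝ) : EReal)) (𝓝[>] 0) := by
        rw [limsup_comp, hmap]
    _ ≤ logExponent u := limsup_div_neg_log_mul_le u (inv_pos.2 hc)

theorem logExponent_comp_mul (u : ℝ → EReal) {c : ℝ} (hc : 0 < c) :
    logExponent (fun ε => u (c * ε)) = logExponent u := by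
  refine le_antisymm (logExponent_comp_mul_le u hc) ?_
  simpa only [mul_inv_cancel_left₀ hc.ne'] using
    logExponent_comp_mul_le (fun ε => u (c * ε)) (inv_pos.2 hc)

theorem thickness_image_le_general {B H : Type*}
    [NormedAddCommGroup B] [NormedSpace ℝ B]
    [NormedAddCommGroup H] [InnerProductSpace ℝ H]
    (Φ : B →L[ℝ] H)
    (X : Set B) :
    thickness (Φ '' X) ≤ thickness X := by
  have hc : 0 < ‖Φ‖ + 1 := by positivity
  calc thickness (Φ '' X)
      = logExponent fun ε => elog (thickNum (Φ '' X) ((‖Φ‖ + 1) * ε)) := by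
        rw [thickness_eq_logExponent]
        exact (logExponent_comp_mul _ hc).symm
    _ ≤ logExponent fun ε => elog (thickNum X ε) := logExponent_mono fun ε =>
        elog_mono_s9 (thickNum_image_le Φ X (le_add_of_nonneg_right zero_le_one) ε)
    _ = thickness X := (thickness_eq_logExponent X).symm

/-- a bounded injective linear map into a Hilbert space does not increase
the thickness exponent of a compact set. -/
theorem thickness_image_le {B H : Type*}
    [NormedAddCommGroup B] [NormedSpace ℝ B] [CompleteSpace B]
    [NormedAddCommGroup H] [InnerProductSpace ℝ H] [CompleteSpace H]
    (Φ : B →L[ℝ] H) (hΦ : Function.Injective Φ)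
    (X : Set B) (hX : IsCompact X) :
    thickness (Φ '' X) ≤ thickness X :=
  thickness_image_le_general Φ X
end

section
/- Let (α_n) be a decreasing positive sequence with α_n → 0 and A = {α_n e_n : n ∈ ℕ} ⊂ ℓ₂. Then the thickness exponent of A in ℓ₂ equals its box-counting dimension: τ(A; ℓ₂) = d_B(A) = limsup_{n→∞} (log n)/(−log α_n). -/
/-!
For `A = {α n • e n}` with `e` orthonormal, the counting functions of `τ` and of `d_B` are
comparable, up to a factor `2` and a rescaling of `ε`, with `M(δ) = #{n | δ ≤ α n}`.
The span of the first `M(ε)` vectors is within `ε` of `A`, and `M(ε/2) + 1` balls of radius `ε`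
cover `A`. Conversely, the points with `α n ≥ 2ε` are `2ε`-separated, so no `ε`-ball contains two
of them; and if `V` is within `ε/√2` of the points with `α n ≥ ε`, each such `e n` has
`‖P_V e n‖² ≥ 1/2`, while Bessel's inequality gives `∑ ‖P_V e n‖² ≤ dim V`.
Such comparisons do not change the exponent `limsup log N(ε) / (-log ε)`, and the exponent of `M`
is `limsup log n / (-log α n)`.
-/

open Filter Metric Set Pointwise Topology

theorem limsup_coe_div_le_limsup_coe_div {β : Type*} {l : Filter β} [l.NeBot]
    {u v b c : β → ℝ} {K : ℝ} (hb : Tendsto b l atTop) (hc : Tendsto c l atTop)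
    (hv : ∀ᶠ x in l, 0 ≤ v x) (hcb : ∀ᶠ x in l, c x ≤ b x + K) (huv : ∀ᶠ x in l, u x ≤ v x + K) :
    limsup (fun x => ((u x / b x : ℝ) : EReal)) l ≤
      limsup (fun x => ((v x / c x : ℝ) : EReal)) l := by
  set L := limsup (fun x => ((v x / c x : ℝ) : EReal)) l
  have hL : 0 ≤ L := by
    refine le_limsup_of_frequently_le (Eventually.frequently ?_) (by isBoundedDefault)
    filter_upwards [hv, hc.eventually_gt_atTop 0] with x hvx hcx
    exact_mod_cast div_nonneg hvx hcx.le
  refine EReal.le_of_forall_lt_iff_le.1 fun z hz => ?_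
  obtain ⟨r, hLr, hrz⟩ := EReal.exists_between_coe_real hz
  have hr : 0 ≤ r := by exact_mod_cast hL.trans hLr.le
  have hrz : r < z := by exact_mod_cast hrz
  -- `u ≤ v + K < r c + K ≤ r b + (r + 1) K`, and the constant is absorbed once `b` is large
  refine limsup_le_of_le (by isBoundedDefault) ?_
  filter_upwards [eventually_lt_of_limsup_lt hLr, huv, hcb, hc.eventually_gt_atTop 0,
    hb.eventually_gt_atTop 0, hb.eventually_ge_atTop ((r + 1) * K / (z - r))]
    with x hvc hux hcx hc0 hb0 hbK
  have hvc : v x < r * c x := (div_lt_iff₀ hc0).1 (by exact_mod_cast hvc)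
  have hK : (r + 1) * K ≤ (z - r) * b x := by rwa [div_le_iff₀' (sub_pos.2 hrz)] at hbK
  have : u x / b x ≤ z := by
    rw [div_le_iff₀ hb0]
    nlinarith
  exact_mod_cast this

theorem Real.log_natCast_le_add_of_le_mul {a b C : ℕ} (h : a ≤ C * b) :
    Real.log a ≤ Real.log C + Real.log b := by
  rcases a.eq_zero_or_pos with rfl | ha
  · simpa using add_nonneg (Real.log_natCast_nonneg C) (Real.log_natCast_nonneg b)
  · have hC : 0 < C := Nat.pos_of_ne_zero (by rintro rfl; omega)
    have hb : 0 < b := Nat.pos_of_ne_zero (by rintro rfl; omega)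
    rw [← Real.log_mul (by positivity) (by positivity)]
    exact Real.log_le_log (by positivity) (by exact_mod_cast h)

theorem tendsto_neg_log_nhdsGT_zero : Tendsto (fun ε : ℝ => -Real.log ε) (𝓝[>] 0) atTop :=
  tendsto_neg_atBot_atTop.comp Real.tendsto_log_nhdsGT_zero

noncomputable def growthExp (f : ℝ → ℕ∞) : EReal :=
  limsup (fun ε : ℝ => elog (f ε) / ((-Real.log ε : ℝ) : EReal)) (𝓝[>] 0)

theorem thickness_eq_growthExp {E : Type*} [NormedAddCommGroup E] [NormedSpace ℝ E] (X : Set E) :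
    thickness X = growthExp (thickNum X) := rfl

theorem dimBox_eq_growthExp {E : Type*} [NormedAddCommGroup E] (X : Set E) :
    dimBox X = growthExp (coverNum X) := rfl

theorem growthExp_eq_limsup {f : ℝ → ℕ∞} (hf : ∀ᶠ ε in 𝓝[>] 0, f ε ≠ ⊤) :
    growthExp f =
      limsup (fun ε : ℝ => ((Real.log (f ε).toNat / -Real.log ε : ℝ) : EReal)) (𝓝[>] 0) := by
  refine limsup_congr ?_
  filter_upwards [hf] with ε hε
  rw [elog, if_neg hε, EReal.coe_div]

theorem growthExp_le_of_le_mul {f g : ℝ → ℕ∞} {C : ℕ} {c : ℝ} (hc : 0 < c)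
    (hg : ∀ᶠ ε in 𝓝[>] 0, g ε ≠ ⊤) (hfg : ∀ᶠ ε in 𝓝[>] 0, f ε ≤ C * g (c * ε)) :
    growthExp f ≤ growthExp g := by
  have hmul : Tendsto (fun ε : ℝ => c * ε) (𝓝[>] 0) (𝓝[>] 0) :=
    tendsto_iff_comap.2 (comap_mulLeft_nhdsGT_zero hc).ge
  have hgc := eventually_nhdsGT_zero_mul_left hc hg
  have hf : ∀ᶠ ε in 𝓝[>] 0, f ε ≠ ⊤ := by
    filter_upwards [hfg, hgc] with ε h hε
    exact ne_top_of_le_ne_top (WithTop.mul_ne_top (ENat.natCast_ne_top C) hε) h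
  rw [growthExp_eq_limsup hf, growthExp_eq_limsup hg]
  calc _ ≤ limsup (fun ε : ℝ => ((Real.log (g (c * ε)).toNat / -Real.log (c * ε) : ℝ) : EReal))
          (𝓝[>] 0) := by
        refine limsup_coe_div_le_limsup_coe_div (K := Real.log C + |Real.log c|)
          tendsto_neg_log_nhdsGT_zero
          (tendsto_neg_log_nhdsGT_zero.comp hmul)
          (.of_forall fun _ => Real.log_natCast_nonneg _) ?_ ?_
        · filter_upwards [self_mem_nhdsWithin] with ε (hε : 0 < ε)
          rw [Real.log_mul hc.ne' hε.ne']
          linarith [neg_abs_le (Real.log c), Real.log_natCast_nonneg C]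
        · filter_upwards [hfg, hgc] with ε h hε
          have h' : (f ε).toNat ≤ C * (g (c * ε)).toNat := by
            simpa using ENat.toNat_le_toNat h (WithTop.mul_ne_top (ENat.natCast_ne_top C) hε)
          linarith [Real.log_natCast_le_add_of_le_mul h', abs_nonneg (Real.log c)]
    _ ≤ _ := hmul.limsup_comp_le_limsup
          (u := fun ε : ℝ => ((Real.log (g ε).toNat / -Real.log ε : ℝ) : EReal))

/-- For antitone `α` this is `#{n | δ ≤ α n}`. -/
noncomputable def firstBelow (α : ℕ → ℝ) (δ : ℝ) : ℕ := sInf {n | α n < δ}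

section firstBelow

variable {α : ℕ → ℝ} {δ : ℝ} {k : ℕ}

theorem firstBelow_spec (hlim : Tendsto α atTop (𝓝 0)) (hδ : 0 < δ) :
    α (firstBelow α δ) < δ :=
  Nat.sInf_mem (hlim.eventually (eventually_lt_nhds hδ)).exists

theorem le_of_lt_firstBelow (hk : k < firstBelow α δ) : δ ≤ α k :=
  not_lt.1 fun h => Nat.notMem_of_lt_sInf hk h

theorem lt_of_firstBelow_le (hdec : Antitone α) (hlim : Tendsto α atTop (𝓝 0)) (hδ : 0 < δ)
    (hk : firstBelow α δ ≤ k) : α k < δ :=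
  (hdec hk).trans_lt (firstBelow_spec hlim hδ)

theorem le_firstBelow_self (hpos : ∀ n, 0 < α n) (hdec : Antitone α)
    (hlim : Tendsto α atTop (𝓝 0)) (n : ℕ) : n ≤ firstBelow α (α n) :=
  not_lt.1 fun h => (lt_of_firstBelow_le hdec hlim (hpos n) h.le).false

theorem tendsto_firstBelow (hpos : ∀ n, 0 < α n) (hdec : Antitone α)
    (hlim : Tendsto α atTop (𝓝 0)) : Tendsto (firstBelow α) (𝓝[>] 0) atTop := by
  refine tendsto_atTop.2 fun N => ?_
  filter_upwards [Ioo_mem_nhdsGT (hpos N)] with δ hδ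
  exact not_lt.1 fun h => (lt_of_firstBelow_le hdec hlim hδ.1 h.le).not_gt hδ.2

end firstBelow

theorem growthExp_firstBelow {α : ℕ → ℝ} (hpos : ∀ n, 0 < α n) (hdec : Antitone α)
    (hlim : Tendsto α atTop (𝓝 0)) :
    growthExp (fun δ => firstBelow α δ) =
      limsup (fun n : ℕ => ((Real.log n / -Real.log (α n) : ℝ) : EReal)) atTop := by
  have hα : Tendsto α atTop (𝓝[>] 0) :=
    tendsto_nhdsWithin_of_tendsto_nhds_of_eventually_within _ hlim (.of_forall hpos)
  have hM := tendsto_firstBelow hpos hdec hlim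
  rw [growthExp_eq_limsup (.of_forall fun _ => ENat.natCast_ne_top _)]
  simp only [ENat.toNat_natCast]
  apply le_antisymm
  · -- compare `δ` with the last term `α (firstBelow α δ - 1) ≥ δ` of the sequence above `δ`
    have hM' := (tendsto_sub_atTop_nat 1).comp hM
    calc _ ≤ limsup (fun δ : ℝ => ((Real.log (firstBelow α δ - 1 : ℕ) /
              -Real.log (α (firstBelow α δ - 1)) : ℝ) : EReal)) (𝓝[>] 0) := by
          refine limsup_coe_div_le_limsup_coe_div (K := Real.log 2) tendsto_neg_log_nhdsGT_zero
            (tendsto_neg_log_nhdsGT_zero.comp (hα.comp hM'))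
            (.of_forall fun _ => Real.log_natCast_nonneg _) ?_ ?_
          · filter_upwards [self_mem_nhdsWithin, hM.eventually_ge_atTop 1] with δ (hδ : 0 < δ) h1
            have := Real.log_le_log hδ
              (le_of_lt_firstBelow (α := α) (by omega : firstBelow α δ - 1 < firstBelow α δ))
            linarith [Real.log_nonneg (one_le_two : (1 : ℝ) ≤ 2)]
          · filter_upwards [hM.eventually_ge_atTop 2] with δ h2
            have := Real.log_natCast_le_add_of_le_mul
              (by omega : firstBelow α δ ≤ 2 * (firstBelow α δ - 1))
            push_cast at this
            linarith
      _ ≤ _ := hM'.limsup_comp_le_limsup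
            (u := fun n : ℕ => ((Real.log n / -Real.log (α n) : ℝ) : EReal))
  · calc _ ≤ limsup (fun n : ℕ => ((Real.log (firstBelow α (α n)) / -Real.log (α n) : ℝ) : EReal))
            atTop := by
          refine limsup_le_limsup ?_ (by isBoundedDefault) (by isBoundedDefault)
          filter_upwards [hlim.eventually (eventually_lt_nhds one_pos)] with n hn
          have hlog : 0 < -Real.log (α n) := neg_pos.2 (Real.log_neg (hpos n) hn)
          have hn' : Real.log n ≤ Real.log (firstBelow α (α n)) := by
            simpa using Real.log_natCast_le_add_of_le_mul (C := 1)
              (by simpa using le_firstBelow_self hpos hdec hlim n)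
          exact EReal.coe_le_coe_iff.2 (div_le_div_of_nonneg_right hn' hlog.le)
      _ ≤ _ := hα.limsup_comp_le_limsup
            (u := fun δ : ℝ => ((Real.log (firstBelow α δ) / -Real.log δ : ℝ) : EReal))

section InnerProductSpace

open Module

variable {𝕜 E : Type*} [RCLike 𝕜] [NormedAddCommGroup E] [InnerProductSpace 𝕜 E]

theorem Submodule.infDist_eq_norm_sub_starProjection (K : Submodule 𝕜 E)
    [K.HasOrthogonalProjection] (x : E) : infDist x K = ‖x - K.starProjection x‖ := by
  rw [K.starProjection_minimal, infDist_eq_iInf]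
  simp only [dist_eq_norm]
  rfl

theorem Submodule.infDist_smul (K : Submodule 𝕜 E) [K.HasOrthogonalProjection] (c : 𝕜) (x : E) :
    infDist (c • x) K = ‖c‖ * infDist x K := by
  simp only [K.infDist_eq_norm_sub_starProjection, map_smul, ← smul_sub, norm_smul]

theorem Orthonormal.sum_norm_starProjection_sq_le_finrank {ι : Type*} {e : ι → E}
    (he : Orthonormal 𝕜 e) (K : Submodule 𝕜 E) [FiniteDimensional 𝕜 K] (s : Finset ι) :
    ∑ i ∈ s, ‖K.starProjection (e i)‖ ^ 2 ≤ finrank 𝕜 K := by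
  set w := stdOrthonormalBasis 𝕜 K
  have hP : ∀ x, ‖K.starProjection x‖ ^ 2 = ∑ j, ‖inner 𝕜 x (w j : E)‖ ^ 2 := fun x => by
    rw [K.starProjection_apply]
    change ‖K.orthogonalProjectionOnto x‖ ^ 2 = _
    rw [← w.sum_sq_norm_inner_left]
    simp only [Submodule.inner_orthogonalProjectionOnto_eq_of_mem_right]
  calc ∑ i ∈ s, ‖K.starProjection (e i)‖ ^ 2
      = ∑ j, ∑ i ∈ s, ‖inner 𝕜 (e i) (w j : E)‖ ^ 2 := by simp only [hP]; exact Finset.sum_comm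
    _ ≤ ∑ j, ‖(w j : E)‖ ^ 2 := Finset.sum_le_sum fun j _ => he.sum_inner_products_le _
    _ = finrank 𝕜 K := by
      change ∑ j, ‖w j‖ ^ 2 = _
      simp [w.orthonormal.1]

theorem Orthonormal.card_mul_le_finrank {ι : Type*} {e : ι → E} (he : Orthonormal 𝕜 e)
    (K : Submodule 𝕜 E) [FiniteDimensional 𝕜 K] (s : Finset ι) {δ : ℝ}
    (hs : ∀ i ∈ s, infDist (e i) K ^ 2 ≤ δ) : (1 - δ) * s.card ≤ finrank 𝕜 K := by
  have hproj : ∀ i ∈ s, 1 - δ ≤ ‖K.starProjection (e i)‖ ^ 2 := fun i hi => by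
    have h := Submodule.norm_sq_eq_add_norm_sq_starProjection (e i) K
    rw [K.starProjection_orthogonal', sub_apply, one_apply_eq_self,
      ← K.infDist_eq_norm_sub_starProjection, he.1 i] at h
    linarith [hs i hi]
  calc (1 - δ) * s.card = ∑ i ∈ s, (1 - δ) := by rw [Finset.sum_const, nsmul_eq_mul, mul_comm]
    _ ≤ ∑ i ∈ s, ‖K.starProjection (e i)‖ ^ 2 := Finset.sum_le_sum hproj
    _ ≤ finrank 𝕜 K := he.sum_norm_starProjection_sq_le_finrank K s

end InnerProductSpace

theorem card_le_coverNum {ι E : Type*} [SeminormedAddCommGroup E] {X : Set E} {ε : ℝ}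
    (s : Finset ι) (x : ι → E) (hx : ∀ i ∈ s, x i ∈ X)
    (hsep : ∀ i ∈ s, ∀ j ∈ s, i ≠ j → 2 * ε ≤ dist (x i) (x j)) :
    (s.card : ℕ∞) ≤ coverNum X ε := by
  refine le_sInf ?_
  rintro _ ⟨F, -, hcov, rfl⟩
  have hcenter : ∀ i ∈ s, ∃ c ∈ F, dist (x i) c < ε := fun i hi => by
    simpa using hcov (hx i hi)
  choose! c hcF hc using hcenter
  have hinj : Set.InjOn c s := fun i hi j hj hij => by
    by_contra hne
    have hi' := hc i hi
    rw [hij] at hi'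
    linarith [dist_triangle_right (x i) (x j) (c j), hsep i hi j hj hne, hc j hj]
  exact_mod_cast Finset.card_le_card_of_injOn c hcF hinj

theorem lp.orthonormal_single {𝕜 ι : Type*} [RCLike 𝕜] [DecidableEq ι] :
    Orthonormal 𝕜 fun i : ι => lp.single 2 i (1 : 𝕜) := by
  rw [orthonormal_iff_ite]
  intro i j
  rw [lp.inner_single_left, lp.single_apply]
  split_ifs <;> simp_all

section OrthonormalSequence

open Module

variable {E : Type*} [NormedAddCommGroup E] [InnerProductSpace ℝ E] {e : ℕ → E}
  {α : ℕ → ℝ} {ε : ℝ}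

theorem Orthonormal.norm_smul_apply (he : Orthonormal ℝ e) (a : ℝ) (n : ℕ) :
    ‖a • e n‖ = |a| := by
  rw [norm_smul, he.1 n, mul_one, Real.norm_eq_abs]

theorem Orthonormal.abs_le_dist_smul (he : Orthonormal ℝ e) {k l : ℕ} (hkl : k ≠ l) (a b : ℝ) :
    |a| ≤ dist (a • e k) (b • e l) := by
  have hinner : inner ℝ (e k) (a • e k - b • e l) = a := by
    rw [inner_sub_right, real_inner_smul_right, real_inner_smul_right, real_inner_self_eq_norm_sq,
      he.1 k, he.2 hkl]
    ring
  calc |a| = |inner ℝ (e k) (a • e k - b • e l)| := by rw [hinner]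
    _ ≤ ‖e k‖ * ‖a • e k - b • e l‖ := abs_real_inner_le_norm _ _
    _ = dist (a • e k) (b • e l) := by rw [he.1 k, one_mul, dist_eq_norm]

theorem Orthonormal.thickNum_range_smul_le (he : Orthonormal ℝ e) (hpos : ∀ n, 0 < α n)
    (hdec : Antitone α) (hlim : Tendsto α atTop (𝓝 0)) (hε : 0 < ε) :
    thickNum (Set.range fun n => α n • e n) ε ≤ firstBelow α ε := by
  set m := firstBelow α ε
  let V := Submodule.span ℝ (Set.range fun i : Fin m => e i)
  have hV : FiniteDimensional ℝ V := .span_of_finite ℝ (Set.finite_range _)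
  refine le_trans (b := (finrank ℝ V : ℕ∞)) (sInf_le ⟨V, hV, rfl, ?_⟩) ?_
  · rintro _ ⟨n, rfl⟩
    rcases lt_or_ge n m with hn | hn
    · have hmem : α n • e n ∈ V := V.smul_mem _ (Submodule.subset_span ⟨⟨n, hn⟩, rfl⟩)
      rw [infDist_zero_of_mem hmem]
      exact hε.le
    · calc infDist (α n • e n) V ≤ dist (α n • e n) 0 := infDist_le_dist_of_mem V.zero_mem
        _ = α n := by rw [dist_zero_right, he.norm_smul_apply, abs_of_pos (hpos n)]
        _ ≤ ε := (lt_of_firstBelow_le hdec hlim hε hn).le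
  · exact_mod_cast (finrank_range_le_card _).trans (by simp)

theorem Orthonormal.firstBelow_le_two_mul_finrank (he : Orthonormal ℝ e) (hε : 0 < ε)
    (V : Submodule ℝ E) [FiniteDimensional ℝ V]
    (hV : ∀ n, infDist (α n • e n) V ≤ ε / √2) : firstBelow α ε ≤ 2 * finrank ℝ V := by
  have hdist : ∀ n ∈ Finset.range (firstBelow α ε), infDist (e n) V ^ 2 ≤ 1 / 2 := by
    intro n hn
    have hαn : ε ≤ α n := le_of_lt_firstBelow (Finset.mem_range.1 hn)
    have h := hV n
    rw [V.infDist_smul, Real.norm_eq_abs, abs_of_pos (hε.trans_le hαn)] at h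
    have h1 : infDist (e n) V ≤ 1 / √2 := by
      rw [le_div_iff₀ (by positivity)] at h ⊢
      nlinarith [hε.trans_le hαn,
        mul_nonneg (infDist_nonneg (x := e n) (s := V)) (Real.sqrt_nonneg 2)]
    calc infDist (e n) V ^ 2 ≤ (1 / √2) ^ 2 := pow_le_pow_left₀ infDist_nonneg h1 2
      _ = 1 / 2 := by rw [div_pow, Real.sq_sqrt zero_le_two, one_pow]
  have := he.card_mul_le_finrank V _ hdist
  rw [Finset.card_range] at this
  exact_mod_cast (by linarith : (firstBelow α ε : ℝ) ≤ 2 * finrank ℝ V)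

theorem Orthonormal.firstBelow_le_two_mul_thickNum (he : Orthonormal ℝ e) (hε : 0 < ε) :
    (firstBelow α ε : ℕ∞) ≤ 2 * thickNum (Set.range fun n => α n • e n) (ε / √2) := by
  rcases Set.eq_empty_or_nonempty {d : ℕ∞ | ∃ V : Submodule ℝ E, FiniteDimensional ℝ V ∧
      d = finrank ℝ V ∧ ∀ x ∈ Set.range fun n => α n • e n, infDist x V ≤ ε / √2} with h | h
  · rw [thickNum, h, sInf_empty, ENat.mul_top two_ne_zero]
    exact le_top
  · obtain ⟨V, hV, hd, hdist⟩ := csInf_mem h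
    rw [thickNum, hd]
    exact_mod_cast he.firstBelow_le_two_mul_finrank hε V fun n => hdist _ ⟨n, rfl⟩

theorem Orthonormal.coverNum_range_smul_le (he : Orthonormal ℝ e) (hpos : ∀ n, 0 < α n)
    (hdec : Antitone α) (hlim : Tendsto α atTop (𝓝 0)) (hε : 0 < ε) :
    coverNum (Set.range fun n => α n • e n) ε ≤ firstBelow α (ε / 2) + 1 := by
  classical
  set m := firstBelow α (ε / 2)
  have hnorm : ∀ n, ‖α n • e n‖ = α n := fun n => by
    rw [he.norm_smul_apply, abs_of_pos (hpos n)]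
  let F := (Finset.range (m + 1)).image fun n => α n • e n
  refine le_trans (b := (F.card : ℕ∞)) (sInf_le ⟨F, ?_, ?_, rfl⟩) ?_
  · simp [F]
  · rintro _ ⟨n, rfl⟩
    refine Set.mem_iUnion₂.2 ?_
    rcases lt_or_ge n (m + 1) with hn | hn
    · exact ⟨_, Finset.mem_image_of_mem _ (Finset.mem_range.2 hn), mem_ball_self hε⟩
    · refine ⟨_, Finset.mem_image_of_mem _ (Finset.mem_range.2 m.lt_succ_self), ?_⟩
      rw [mem_ball, dist_eq_norm]
      calc ‖α n • e n - α m • e m‖ ≤ ‖α n • e n‖ + ‖α m • e m‖ := norm_sub_le _ _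
        _ = α n + α m := by rw [hnorm, hnorm]
        _ < ε / 2 + ε / 2 := add_lt_add
            (lt_of_firstBelow_le hdec hlim (half_pos hε) (by omega))
            (firstBelow_spec hlim (half_pos hε))
        _ = ε := add_halves ε
  · exact_mod_cast Finset.card_image_le.trans (by simp)

theorem Orthonormal.firstBelow_le_coverNum (he : Orthonormal ℝ e) :
    (firstBelow α ε : ℕ∞) ≤ coverNum (Set.range fun n => α n • e n) (ε / 2) := by
  have := card_le_coverNum (X := Set.range fun n => α n • e n) (ε := ε / 2)
    (Finset.range (firstBelow α ε)) (fun n => α n • e n) (fun n _ => ⟨n, rfl⟩)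
    fun k hk l _ hkl => by
      rw [mul_div_cancel₀ ε two_ne_zero]
      exact (le_of_lt_firstBelow (Finset.mem_range.1 hk)).trans
        ((le_abs_self _).trans (he.abs_le_dist_smul hkl _ _))
  rwa [Finset.card_range] at this

theorem Orthonormal.thickness_range_smul (he : Orthonormal ℝ e) (hpos : ∀ n, 0 < α n)
    (hdec : Antitone α) (hlim : Tendsto α atTop (𝓝 0)) :
    thickness (Set.range fun n => α n • e n) = growthExp (fun δ => firstBelow α δ) := by
  rw [thickness_eq_growthExp]
  have hthick : ∀ᶠ ε in 𝓝[>] 0, thickNum (Set.range fun n => α n • e n) ε ≤ firstBelow α ε :=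
    eventually_mem_nhdsWithin.mono fun ε hε => he.thickNum_range_smul_le hpos hdec hlim hε
  refine le_antisymm (growthExp_le_of_le_mul (C := 1) one_pos
    (.of_forall fun _ => ENat.natCast_ne_top _) (by simpa using hthick)) ?_
  refine growthExp_le_of_le_mul (C := 2) (inv_pos.2 (Real.sqrt_pos.2 two_pos))
    (hthick.mono fun ε h => ne_top_of_le_ne_top (ENat.natCast_ne_top _) h) ?_
  filter_upwards [self_mem_nhdsWithin] with ε hε
  simpa [div_eq_inv_mul] using he.firstBelow_le_two_mul_thickNum (α := α) hε

theorem Orthonormal.dimBox_range_smul (he : Orthonormal ℝ e) (hpos : ∀ n, 0 < α n)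
    (hdec : Antitone α) (hlim : Tendsto α atTop (𝓝 0)) :
    dimBox (Set.range fun n => α n • e n) = growthExp (fun δ => firstBelow α δ) := by
  rw [dimBox_eq_growthExp]
  have hcover : ∀ᶠ ε in 𝓝[>] 0,
      coverNum (Set.range fun n => α n • e n) ε ≤ firstBelow α (ε / 2) + 1 :=
    eventually_mem_nhdsWithin.mono fun ε hε => he.coverNum_range_smul_le hpos hdec hlim hε
  refine le_antisymm (growthExp_le_of_le_mul (C := 2) (inv_pos.2 two_pos)
    (.of_forall fun _ => ENat.natCast_ne_top _) ?_) ?_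
  · filter_upwards [hcover, eventually_nhdsGT_zero_mul_left (inv_pos.2 two_pos)
      ((tendsto_firstBelow hpos hdec hlim).eventually_ge_atTop 1)] with ε h h1
    rw [div_eq_inv_mul] at h
    refine h.trans ?_
    norm_cast
    omega
  · refine growthExp_le_of_le_mul (C := 1) (inv_pos.2 two_pos)
      (hcover.mono fun ε h => ne_top_of_le_ne_top (ENat.natCast_ne_top _) h)
      (.of_forall fun ε => by simpa [div_eq_inv_mul] using he.firstBelow_le_coverNum (ε := ε))

end OrthonormalSequence

/-- for `A = {α_n e_n} ⊂ ℓ₂` the thickness exponent equals the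
box-counting dimension, which is `limsup (log n)/(-log α_n)`. -/
theorem thickness_eq_dimBox_orthogonal_seq (α : ℕ → ℝ) (hpos : ∀ n, 0 < α n)
    (hdec : Antitone α) (hlim : Tendsto α atTop (𝓝 0)) :
    thickness (Set.range fun n : ℕ => (lp.single 2 n (α n) : lp (fun _ : ℕ => ℝ) 2))
        = dimBox (Set.range fun n : ℕ => (lp.single 2 n (α n) : lp (fun _ : ℕ => ℝ) 2)) ∧
      dimBox (Set.range fun n : ℕ => (lp.single 2 n (α n) : lp (fun _ : ℕ => ℝ) 2))
        = Filter.limsup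
            (fun n : ℕ => ((Real.log n / (-Real.log (α n)) : ℝ) : EReal)) atTop := by
  have hA : (fun n : ℕ => (lp.single 2 n (α n) : lp (fun _ : ℕ => ℝ) 2)) =
      fun n => α n • lp.single 2 n 1 := by
    simp_rw [← lp.single_smul, smul_eq_mul, mul_one]
  have he : Orthonormal ℝ fun n : ℕ => (lp.single 2 n 1 : lp (fun _ : ℕ => ℝ) 2) :=
    lp.orthonormal_single
  rw [hA, he.thickness_range_smul hpos hdec hlim, he.dimBox_range_smul hpos hdec hlim,
    growthExp_firstBelow hpos hdec hlim]
  exact ⟨rfl, rfl⟩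
end
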